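/- arXiv:1501.03432 — 3 statements merged into one kernel-verified Lean document; each statement's English description precedes it below -/
import Mathlib

section
/- Let G be a graph on vertices {1,…,n} with nonnegative vertex weights w_i, and suppose that for every independent set I of G, ∑_{j∈I} w_j ≤ y. Then for every assignment p ∈ {0,1}^n, ∑_i w_i p_i − ∑_i w_i ∑_{j ∈ N(i)} p_i p_j ≤ y, where N(i) denotes the neighborhood of vertex i in G. -/
/-!
Write the penalised sum as `∑ i, w i * p i * (1 - #{neighbours j of i with p j = 1})`.
A vertex with `p i = 1` and no switched-on neighbour contributes `w i`, every other vertex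
contributes at most `0` because `w i ≥ 0`; the former vertices form an independent set.
-/

namespace SimpleGraph

variable {V : Type*} [Fintype V] (G : SimpleGraph V) [DecidableRel G.Adj]

open Classical in
noncomputable def isolatedSupport (p : V → ℝ) : Finset V :=
  {i | p i = 1 ∧ ∀ j ∈ G.neighborFinset i, p j = 0}

variable {G}

lemma mem_isolatedSupport {p : V → ℝ} {i : V} :
    i ∈ G.isolatedSupport p ↔ p i = 1 ∧ ∀ j ∈ G.neighborFinset i, p j = 0 := by
  simp [isolatedSupport]

lemma not_adj_of_mem_isolatedSupport {p : V → ℝ} {i j : V}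
    (hi : i ∈ G.isolatedSupport p) (hj : j ∈ G.isolatedSupport p) : ¬ G.Adj i j := by
  intro hij
  have hpj : p j = 0 := (mem_isolatedSupport.1 hi).2 j ((mem_neighborFinset G i j).2 hij)
  simp [(mem_isolatedSupport.1 hj).1] at hpj

lemma penalized_sum_eq (w p : V → ℝ) :
    ∑ i, w i * p i - ∑ i, w i * ∑ j ∈ G.neighborFinset i, p i * p j
      = ∑ i, w i * p i * (1 - ∑ j ∈ G.neighborFinset i, p j) := by
  rw [← Finset.sum_sub_distrib]
  refine Finset.sum_congr rfl fun i _ => ?_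
  simp only [mul_sub, mul_one, Finset.mul_sum, mul_assoc]

lemma penalized_term_le [DecidableEq V] {w p : V → ℝ} (hp : ∀ i, p i = 0 ∨ p i = 1) {i : V}
    (hwi : 0 ≤ w i) :
    w i * p i * (1 - ∑ j ∈ G.neighborFinset i, p j)
      ≤ if i ∈ G.isolatedSupport p then w i else 0 := by
  split_ifs with hi
  · obtain ⟨hpi, hnbr⟩ := mem_isolatedSupport.1 hi
    simp [hpi, Finset.sum_eq_zero hnbr]
  · rcases hp i with hpi | hpi
    · simp [hpi]
    obtain ⟨j, hj, hpj⟩ : ∃ j ∈ G.neighborFinset i, p j ≠ 0 := by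
      by_contra! h
      exact hi (mem_isolatedSupport.2 ⟨hpi, h⟩)
    have hp_nonneg : ∀ k, 0 ≤ p k := fun k => by rcases hp k with h | h <;> simp [h]
    have hsum : 1 ≤ ∑ j ∈ G.neighborFinset i, p j :=
      ((hp j).resolve_left hpj).symm.le.trans
        (Finset.single_le_sum (fun k _ => hp_nonneg k) hj)
    rw [hpi, mul_one]
    exact mul_nonpos_of_nonneg_of_nonpos hwi (by linarith)

end SimpleGraph

/-- Noncontextual bound of the SI-NC inequality: if every independent set of `G` has
weight at most `y`, then for every 0/1 assignment `p`,
`∑ i, w i * p i − ∑ i, w i * ∑_{j ∈ N(i)} p i * p j ≤ y`. -/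
theorem noncontextual_bound {n : ℕ} (G : SimpleGraph (Fin n)) [DecidableRel G.Adj]
    (w : Fin n → ℝ) (hw : ∀ i, 0 ≤ w i) (y : ℝ)
    (hI : ∀ I : Finset (Fin n), (∀ i ∈ I, ∀ j ∈ I, ¬ G.Adj i j) → ∑ j ∈ I, w j ≤ y)
    (p : Fin n → ℝ) (hp : ∀ i, p i = 0 ∨ p i = 1) :
    ∑ i, w i * p i - ∑ i, w i * ∑ j ∈ G.neighborFinset i, p i * p j ≤ y := by
  calc ∑ i, w i * p i - ∑ i, w i * ∑ j ∈ G.neighborFinset i, p i * p j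
      = ∑ i, w i * p i * (1 - ∑ j ∈ G.neighborFinset i, p j) :=
        SimpleGraph.penalized_sum_eq w p
    _ ≤ ∑ i, if i ∈ G.isolatedSupport p then w i else 0 :=
      Finset.sum_le_sum fun i _ => SimpleGraph.penalized_term_le hp (hw i)
    _ = ∑ i ∈ G.isolatedSupport p, w i := by rw [Finset.sum_ite_mem, Finset.univ_inter]
    _ ≤ y := hI _ fun i hi j hj => SimpleGraph.not_adj_of_mem_isolatedSupport hi hj
end

section
/- Let Π_1, …, Π_n be rank-one projections on ℂ^d with orthogonality graph G (edge ij iff Π_iΠ_j = 0). Suppose there exist nonnegative weights w_i and 0 ≤ y < 1 such that ∑_{j∈I} w_j ≤ y for every independent set I of G and ∑_i w_i Π_i ≥ 𝟙. Then for every density operator ρ, ∑_i w_i tr(ρΠ_i) − ∑_i w_i ∑_{j: Π_iΠ_j=0} tr(ρ Π_iΠ_j) ≥ 1 > y; i.e., the quantum value of the noncontextuality inequality exceeds its noncontextual bound y for every state. -/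
open Matrix
open scoped ComplexOrder Classical

/-
The correction term only involves orthogonal pairs, where `Π_i Π_j = 0`, so it vanishes and the
quantum value is `tr(ρ ∑ w_i Π_i)`. The trace of a product of two positive semidefinite matrices
is nonnegative (write `ρ = Xᴴ X` and cycle to `tr(X M Xᴴ)`); applied to `ρ` and
`∑ w_i Π_i - 𝟙` this gives a value of at least `tr ρ = 1`.
-/

section

variable {𝕜 ι n : Type*} [RCLike 𝕜] [Fintype ι] [Fintype n]

open scoped MatrixOrder in
theorem Matrix.PosSemidef.trace_mul_nonneg {A B : Matrix n n 𝕜} (hA : A.PosSemidef)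
    (hB : B.PosSemidef) : 0 ≤ (A * B).trace := by
  obtain ⟨X, rfl⟩ := CStarAlgebra.nonneg_iff_eq_star_mul_self.mp hA.nonneg
  rw [star_eq_conjTranspose, Matrix.mul_assoc, trace_mul_comm]
  exact (hB.mul_mul_conjTranspose_same X).trace_nonneg

theorem re_trace_mul_sum_smul (ρ : Matrix n n 𝕜) (w : ι → ℝ) (P : ι → Matrix n n 𝕜) :
    RCLike.re (ρ * ∑ i, (w i : 𝕜) • P i).trace = ∑ i, w i * RCLike.re (ρ * P i).trace := by
  simp only [Matrix.mul_sum, Matrix.mul_smul, trace_sum, trace_smul, map_sum, smul_eq_mul,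
    RCLike.re_ofReal_mul]

theorem one_le_re_trace_mul_sum_smul [DecidableEq n] {ρ : Matrix n n 𝕜} (hρ : ρ.PosSemidef)
    (htr : ρ.trace = 1) {w : ι → ℝ} {P : ι → Matrix n n 𝕜}
    (hsum : (∑ i, (w i : 𝕜) • P i - 1).PosSemidef) :
    1 ≤ ∑ i, w i * RCLike.re (ρ * P i).trace := by
  have hnonneg := RCLike.nonneg_iff.mp (hρ.trace_mul_nonneg hsum) |>.1
  rw [Matrix.mul_sub, Matrix.mul_one, trace_sub, htr, map_sub, re_trace_mul_sum_smul,
    RCLike.one_re] at hnonneg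
  linarith

end

theorem sum_re_trace_mul_mul_eq_zero_of_orthogonal {n ι : Type*} [Fintype n] (ρ : Matrix n n ℂ)
    (P : ι → Matrix n n ℂ) (i : ι) (J : Finset ι) :
    ∑ j ∈ J.filter (fun j => P i * P j = 0), ((ρ * (P i * P j)).trace).re = 0 :=
  Finset.sum_eq_zero fun j hj => by
    rw [(Finset.mem_filter.mp hj).2, Matrix.mul_zero, trace_zero, Complex.zero_re]

theorem state_independent_violation_general {d n : ℕ} (P : Fin n → Matrix (Fin d) (Fin d) ℂ)
    (w : Fin n → ℝ) (y : ℝ) (hy1 : y < 1)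
    (hsum : (∑ i, (w i : ℂ) • P i - 1).PosSemidef)
    (ρ : Matrix (Fin d) (Fin d) ℂ) (hρ : ρ.PosSemidef) (htr : ρ.trace = 1) :
    1 ≤ ∑ i, w i * ((ρ * P i).trace).re -
        ∑ i, w i * ∑ j ∈ Finset.univ.filter (fun j => P i * P j = 0),
          ((ρ * (P i * P j)).trace).re
      ∧ y < 1 := by
  simp only [sum_re_trace_mul_mul_eq_zero_of_orthogonal, mul_zero, Finset.sum_const_zero,
    sub_zero]
  exact ⟨one_le_re_trace_mul_sum_smul hρ htr hsum, hy1⟩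

/-- State-independent violation: if rank-one projections `P i` on `ℂ^d` admit nonnegative
weights `w` with `∑_{j ∈ I} w j ≤ y < 1` for every independent set `I` of the orthogonality
graph (`i ~ j` iff `P i * P j = 0`) and `∑ i, w i • P i ≥ 𝟙`, then for every density
operator `ρ` the quantum value of the NC inequality is at least `1 > y`. -/
theorem state_independent_violation {d n : ℕ} (P : Fin n → Matrix (Fin d) (Fin d) ℂ)
    (hproj : ∀ i, (P i).IsHermitian ∧ P i * P i = P i ∧ (P i).rank = 1)
    (w : Fin n → ℝ) (hw : ∀ i, 0 ≤ w i) (y : ℝ) (hy0 : 0 ≤ y) (hy1 : y < 1)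
    (hI : ∀ I : Finset (Fin n),
      (∀ i ∈ I, ∀ j ∈ I, i ≠ j → P i * P j ≠ 0) → ∑ j ∈ I, w j ≤ y)
    (hsum : (∑ i, (w i : ℂ) • P i - 1).PosSemidef)
    (ρ : Matrix (Fin d) (Fin d) ℂ) (hρ : ρ.PosSemidef) (htr : ρ.trace = 1) :
    1 ≤ ∑ i, w i * ((ρ * P i).trace).re -
        ∑ i, w i * ∑ j ∈ Finset.univ.filter (fun j => P i * P j = 0),
          ((ρ * (P i * P j)).trace).re
      ∧ y < 1 :=
  state_independent_violation_general P w y hy1 hsum ρ hρ htr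
end

section
/- The 13 Yu–Oh vectors in ℝ³ realize their orthogonality graph: each listed orthogonality relation holds, and exactly those pairs are orthogonal; in particular, every maximal clique has size at most 3. -/
open Matrix

/-- The 13 Yu–Oh vectors in `ℝ³`:
`y1± = (0,±1,1)`, `y2± = (±1,0,1)`, `y3± = (1,±1,0)`, `h0 = (1,1,1)`, `h1 = (-1,1,1)`,
`h2 = (1,-1,1)`, `h3 = (1,1,-1)`, `z1 = (1,0,0)`, `z2 = (0,1,0)`, `z3 = (0,0,1)`. -/
def yuOhVec : Fin 13 → (Fin 3 → ℝ) :=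
  ![![0, 1, 1], ![0, -1, 1], ![1, 0, 1], ![-1, 0, 1], ![1, 1, 0], ![1, -1, 0],
    ![1, 1, 1], ![-1, 1, 1], ![1, -1, 1], ![1, 1, -1],
    ![1, 0, 0], ![0, 1, 0], ![0, 0, 1]]

/-- The Yu–Oh graph: the orthogonality graph of the 13 Yu–Oh vectors. -/
def yuOhGraph : SimpleGraph (Fin 13) :=
  SimpleGraph.fromRel (fun i j => yuOhVec i ⬝ᵥ yuOhVec j = 0)

/-- The 24 orthogonal pairs among the Yu–Oh vectors. -/
def yuOhEdges : List (Fin 13 × Fin 13) :=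
  [(0,1),(0,8),(0,9),(0,10),
   (1,6),(1,7),(1,10),
   (2,3),(2,7),(2,9),(2,11),
   (3,6),(3,8),(3,11),
   (4,5),(4,7),(4,8),(4,12),
   (5,6),(5,9),(5,12),
   (10,11),(10,12),(11,12)]

/-!
The vectors have integer coordinates, so their Gram matrix has integer entries and the
orthogonality relation is settled by exact computation in `ℤ`. Pairwise orthogonal vectors
of nonzero squared length are linearly independent, so a clique in `ℝ³` has at most three members.
-/

namespace Matrix

variable {K ι n : Type*} [Field K] [Fintype n]

theorem linearIndependent_of_pairwise_dotProduct_eq_zero {v : ι → n → K}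
    (horth : Pairwise fun i j => v i ⬝ᵥ v j = 0) (hself : ∀ i, v i ⬝ᵥ v i ≠ 0) :
    LinearIndependent K v :=
  LinearMap.linearIndependent_of_isOrthoᵢ (B := dotProductBilin K K) (fun _ _ hij => horth hij)
    hself

theorem card_le_of_pairwise_dotProduct_eq_zero {v : ι → n → K} {S : Finset ι}
    (horth : ∀ i ∈ S, ∀ j ∈ S, i ≠ j → v i ⬝ᵥ v j = 0) (hself : ∀ i ∈ S, v i ⬝ᵥ v i ≠ 0) :
    S.card ≤ Fintype.card n := by
  have hli : LinearIndependent K fun i : S => v i :=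
    linearIndependent_of_pairwise_dotProduct_eq_zero
      (fun i j hij => horth i i.2 j j.2 (Subtype.coe_ne_coe.mpr hij)) (fun i => hself i i.2)
  simpa using hli.fintype_card_le_finrank

end Matrix

def yuOhVecInt : Fin 13 → Fin 3 → ℤ :=
  ![![0, 1, 1], ![0, -1, 1], ![1, 0, 1], ![-1, 0, 1], ![1, 1, 0], ![1, -1, 0],
    ![1, 1, 1], ![-1, 1, 1], ![1, -1, 1], ![1, 1, -1],
    ![1, 0, 0], ![0, 1, 0], ![0, 0, 1]]

theorem yuOhVec_eq_intCast (i : Fin 13) : yuOhVec i = Int.castRingHom ℝ ∘ yuOhVecInt i := by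
  fin_cases i <;> ext k <;> fin_cases k <;> simp [yuOhVec, yuOhVecInt]

theorem yuOhVec_dotProduct (i j : Fin 13) :
    yuOhVec i ⬝ᵥ yuOhVec j = (yuOhVecInt i ⬝ᵥ yuOhVecInt j : ℤ) := by
  rw [yuOhVec_eq_intCast, yuOhVec_eq_intCast, ← RingHom.map_dotProduct, eq_intCast]

theorem yuOhVecInt_dotProduct_eq_zero_iff : ∀ i j : Fin 13,
    yuOhVecInt i ⬝ᵥ yuOhVecInt j = 0 ↔ (i, j) ∈ yuOhEdges ∨ (j, i) ∈ yuOhEdges := by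
  decide

theorem yuOhVecInt_dotProduct_self_ne_zero : ∀ i : Fin 13, yuOhVecInt i ⬝ᵥ yuOhVecInt i ≠ 0 := by
  decide

/-- The Yu–Oh vectors realize their orthogonality graph: two of them are orthogonal
exactly when they form one of the 24 listed pairs; in particular every clique
(set of pairwise orthogonal vectors) has size at most 3. -/
theorem yuOh_realization :
    (∀ i j : Fin 13, yuOhVec i ⬝ᵥ yuOhVec j = 0 ↔
      ((i, j) ∈ yuOhEdges ∨ (j, i) ∈ yuOhEdges)) ∧
    (∀ S : Finset (Fin 13),
      (∀ i ∈ S, ∀ j ∈ S, i ≠ j → yuOhVec i ⬝ᵥ yuOhVec j = 0) → S.card ≤ 3) := by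
  refine ⟨fun i j => ?_, fun S hS => ?_⟩
  · rw [yuOhVec_dotProduct, Int.cast_eq_zero, yuOhVecInt_dotProduct_eq_zero_iff]
  · have hself (i : Fin 13) : yuOhVec i ⬝ᵥ yuOhVec i ≠ 0 := by
      rw [yuOhVec_dotProduct, Int.cast_ne_zero]
      exact yuOhVecInt_dotProduct_self_ne_zero i
    simpa using Matrix.card_le_of_pairwise_dotProduct_eq_zero hS fun i _ => hself i
end
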